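/- arXiv:1309.7751 — 2 statements merged into one kernel-verified Lean document; each statement's English description precedes it below -/
import Mathlib

section
/- Let n be a positive integer and k ≥ 2 even. If every prime p dividing n satisfies (p−1) ∤ k, then n divides S_k(n) = 1^k + ... + n^k. -/
/-!
It suffices that `p ^ a ∣ S_k(n)` for every prime power `p ^ a ∣ n`. Modulo `p ^ a` the sum consists
of `n / p ^ a` copies of `S = ∑ x : ZMod (p ^ a), x ^ k`. As `(p - 1) ∤ k`, some unit `v` of `ZMod p`
has `v ^ k ≠ 1`; a unit `u` of `ZMod (p ^ a)` lifting `v` then makes `u ^ k - 1` a unit, and the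
substitution `x ↦ u x` gives `u ^ k S = S`, hence `S = 0`.
-/

open Finset

theorem Fintype.sum_pow_eq_zero_of_isUnit_pow_sub_one {R : Type*} [CommRing R] [Fintype R]
    {k : ℕ} (u : Rˣ) (hu : IsUnit ((u : R) ^ k - 1)) : ∑ x : R, x ^ k = 0 := by
  have h : (u : R) ^ k * ∑ x : R, x ^ k = ∑ x : R, x ^ k := by
    rw [mul_sum]
    exact Fintype.sum_equiv (Units.mulLeft u) _ _ fun x => by simp [mul_pow]
  rw [← hu.mul_right_eq_zero, sub_mul, one_mul, h, sub_self]

namespace ZMod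

theorem sum_range_eq_sum_univ {M : Type*} [AddCommMonoid M] (d : ℕ) [NeZero d]
    (f : ZMod d → M) : ∑ j ∈ range d, f j = ∑ x, f x := by
  rw [sum_range, ← (finEquiv d).toEquiv.sum_comp]
  obtain ⟨m, rfl⟩ := Nat.exists_eq_succ_of_ne_zero (NeZero.ne d)
  exact sum_congr rfl fun x _ => congrArg f (Fin.cast_val_eq_self x)

theorem sum_range_mul_eq_nsmul_sum {M : Type*} [AddCommMonoid M] (d t : ℕ) [NeZero d]
    (f : ZMod d → M) : ∑ j ∈ range (d * t), f j = t • ∑ x, f x := by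
  induction t with
  | zero => simp
  | succ t ih =>
    simp only [mul_add_one, sum_range_add, ih, Nat.cast_add, Nat.cast_mul, natCast_self, zero_mul,
      zero_add]
    rw [sum_range_eq_sum_univ, succ_nsmul]

theorem sum_Icc_mul_eq_nsmul_sum {M : Type*} [AddCommMonoid M] (d t : ℕ) [NeZero d]
    (f : ZMod d → M) : ∑ j ∈ Icc 1 (d * t), f j = t • ∑ x, f x := by
  rw [← Ico_add_one_right_eq_Icc, sum_Ico_eq_sum_range, Nat.add_sub_cancel,
    ← Equiv.sum_comp (Equiv.addLeft (1 : ZMod d)) f]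
  simpa using sum_range_mul_eq_nsmul_sum d t (fun x => f (1 + x))

theorem exists_unit_pow_ne_one {p k : ℕ} [Fact p.Prime] (hk : ¬(p - 1) ∣ k) :
    ∃ v : (ZMod p)ˣ, v ^ k ≠ 1 := by
  -- `(ZMod p)ˣ` is cyclic of order `p - 1`, so `p - 1` is its exponent.
  by_contra! h
  apply hk
  rw [← card_units p, ← Nat.card_eq_fintype_card, ← IsCyclic.exponent_eq_card]
  exact Monoid.exponent_dvd_of_forall_pow_eq_one h

theorem isUnit_of_castHom_ne_zero {p a : ℕ} [hp : Fact p.Prime] (ha : a ≠ 0) {x : ZMod (p ^ a)}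
    (hx : castHom (dvd_pow_self p ha) (ZMod p) x ≠ 0) : IsUnit x := by
  rw [← natCast_zmod_val x, map_natCast, Ne, natCast_eq_zero_iff] at hx
  rwa [← natCast_zmod_val x, isUnit_natCast_iff_not_dvd_pow hp.out (Nat.pos_of_ne_zero ha)]

theorem exists_unit_isUnit_pow_sub_one {p a k : ℕ} [Fact p.Prime] (ha : a ≠ 0)
    (hk : ¬(p - 1) ∣ k) : ∃ u : (ZMod (p ^ a))ˣ, IsUnit ((u : ZMod (p ^ a)) ^ k - 1) := by
  obtain ⟨v, hv⟩ := exists_unit_pow_ne_one hk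
  obtain ⟨u, rfl⟩ := unitsMap_surjective (dvd_pow_self p ha) v
  refine ⟨u, isUnit_of_castHom_ne_zero ha ?_⟩
  rw [map_sub, map_pow, map_one, sub_ne_zero, castHom_apply, ← unitsMap_val,
    ← Units.val_pow_eq_pow_val, Ne, Units.val_eq_one]
  exact hv

end ZMod

theorem prime_pow_dvd_sum_Icc_pow {p k : ℕ} (hp : p.Prime) (hk : ¬(p - 1) ∣ k) (a t : ℕ) :
    p ^ a ∣ ∑ j ∈ Icc 1 (p ^ a * t), j ^ k := by
  have := Fact.mk hp
  rcases eq_or_ne a 0 with rfl | ha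
  · simp
  obtain ⟨u, hu⟩ := ZMod.exists_unit_isUnit_pow_sub_one ha hk
  rw [← ZMod.natCast_eq_zero_iff]
  push_cast
  rw [ZMod.sum_Icc_mul_eq_nsmul_sum (f := fun x => x ^ k),
    Fintype.sum_pow_eq_zero_of_isUnit_pow_sub_one u hu, smul_zero]

theorem stmt_11_general (n k : ℕ)
    (h : ∀ p : ℕ, p.Prime → p ∣ n → ¬ (p - 1) ∣ k) :
    n ∣ ∑ j ∈ Finset.Icc 1 n, j ^ k := by
  refine (Nat.dvd_iff_prime_pow_dvd_dvd _ n).2 fun p a hp hpa => ?_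
  rcases eq_or_ne a 0 with rfl | ha
  · simp
  have hpn : p ∣ n := (dvd_pow_self p ha).trans hpa
  obtain ⟨t, rfl⟩ := hpa
  exact prime_pow_dvd_sum_Icc_pow hp (h p hp hpn) a t

theorem stmt_11 (n k : ℕ) (hn : 0 < n) (hk : 2 ≤ k) (hke : Even k)
    (h : ∀ p : ℕ, p.Prime → p ∣ n → ¬ (p - 1) ∣ k) :
    n ∣ ∑ j ∈ Finset.Icc 1 n, j ^ k :=
  stmt_11_general n k h
end

section
/- If n ≡ 2 (mod 4) and k ≥ 1, then the average (1^k + ... + n^k)/n is never an integer. -/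
/-!
Since `j ^ k ≡ j (mod 2)` for `k ≥ 1`, the power sum has the parity of `1 + ⋯ + n = n (n + 1) / 2`,
which is odd when `n ≡ 2 (mod 4)`. An odd number is not a multiple of the even number `n`.
-/

open Finset

lemma Finset.odd_sum_pow_iff_odd_sum (s : Finset ℕ) {k : ℕ} (hk : k ≠ 0) :
    Odd (∑ j ∈ s, j ^ k) ↔ Odd (∑ j ∈ s, j) := by
  simp only [odd_sum_iff_odd_card_odd, Nat.odd_pow_iff hk]

lemma Finset.sum_Icc_id_mul_two (n : ℕ) : (∑ j ∈ Icc 1 n, j) * 2 = n * (n + 1) := by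
  induction n with
  | zero => rfl
  | succ n ih => rw [sum_Icc_succ_top (by omega), add_mul, ih]; ring

lemma odd_sum_Icc_id_of_mod_four_eq_two {n : ℕ} (hn : n % 4 = 2) : Odd (∑ j ∈ Icc 1 n, j) := by
  obtain ⟨q, rfl⟩ : ∃ q, n = 4 * q + 2 := ⟨n / 4, by omega⟩
  have hsum : ∑ j ∈ Icc 1 (4 * q + 2), j = (2 * q + 1) * (4 * q + 3) := by
    nlinarith [sum_Icc_id_mul_two (4 * q + 2)]
  rw [hsum, Nat.odd_mul]
  exact ⟨odd_two_mul_add_one q, 2 * q + 1, by ring⟩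

lemma not_exists_int_eq_div_of_odd_of_even {a b : ℕ} (ha : Odd a) (hb : Even b) (hb0 : b ≠ 0) :
    ¬ ∃ m : ℤ, (a : ℚ) / b = m := by
  rintro ⟨m, hm⟩
  have hab : (a : ℤ) = m * b := by
    rw [div_eq_iff (by exact_mod_cast hb0)] at hm
    exact_mod_cast hm
  have ha_even : Even (a : ℤ) := hab ▸ (hb.natCast (α := ℤ)).mul_left m
  exact Int.not_even_iff_odd.mpr ha.natCast ha_even

theorem stmt_18 (n k : ℕ) (hn : n % 4 = 2) (hk : 1 ≤ k) :
    ¬ ∃ m : ℤ, ((∑ j ∈ Finset.Icc 1 n, j ^ k : ℕ) : ℚ) / (n : ℚ) = (m : ℚ) := by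
  have hodd : Odd (∑ j ∈ Icc 1 n, j ^ k) :=
    (odd_sum_pow_iff_odd_sum _ (by omega)).mpr (odd_sum_Icc_id_of_mod_four_eq_two hn)
  exact not_exists_int_eq_div_of_odd_of_even hodd (Nat.even_iff.mpr (by omega)) (by omega)
end
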